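/- arXiv:1706.01160 — 2 statements merged into one kernel-verified Lean document; each statement's English description precedes it below -/
import Mathlib

section
/- For a Hermitian positive semidefinite matrix $A$ and diagonal matrices $M' \succeq M \succ 0$ (entrywise $\mu_i' \ge \mu_i > 0$), we have $\det(I + M'^{1/2} A M'^{1/2}) \ge \det(I + M^{1/2} A M^{1/2})$. -/
/-!
Write `A = R * R` with `R = √A`. Sylvester's identity `det (1 + X * Y) = det (1 + Y * X)` turns
`det (1 + M^{1/2} A M^{1/2})` into `det (1 + R M R)`, and `M ↦ R M R` is monotone in the Loewner
order. The determinant is Loewner-monotone on positive definite matrices: if `0 < X ≤ Y`, then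
`1 ≤ X^{-1/2} Y X^{-1/2}`, all of whose eigenvalues are therefore at least `1`.
-/

open Matrix ComplexOrder
open scoped MatrixOrder

namespace Matrix

variable {𝕜 n : Type*} [RCLike 𝕜] [Fintype n] [DecidableEq n]

lemma one_le_det_of_one_le {W : Matrix n n 𝕜} (h : 1 ≤ W) : 1 ≤ W.det := by
  have hW : W.IsHermitian := by simpa using (le_iff.mp h).isHermitian.add isHermitian_one
  have hev : ∀ i, 1 ≤ hW.eigenvalues i := fun i =>
    (algebraMap_le_iff_le_spectrum (r := (1 : ℝ)) (a := W) hW.isSelfAdjoint).mp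
      (by simpa using h) _ (hW.eigenvalues_mem_spectrum_real i)
  rw [hW.det_eq_prod_eigenvalues, ← RCLike.ofReal_prod, ← RCLike.ofReal_one,
    RCLike.ofReal_le_ofReal]
  exact Finset.one_le_prod fun i _ => hev i

lemma det_le_det_of_le {X Y : Matrix n n 𝕜} (hX : X.PosDef) (h : X ≤ Y) : X.det ≤ Y.det := by
  set S := CFC.sqrt X
  have hSS : S * S = X := CFC.sqrt_mul_sqrt_self X hX.posSemidef.nonneg
  have hS : IsUnit S.det := isUnit_iff_ne_zero.mpr <| left_ne_zero_of_mul <| by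
    rw [← det_mul, hSS]; exact hX.det_pos.ne'
  set T := S⁻¹
  have hT : IsSelfAdjoint T := (CFC.sqrt_nonneg X).isSelfAdjoint.isHermitian.inv
  have hTXT : T * X * T = 1 := by
    rw [← hSS, show T * (S * S) * T = (T * S) * (S * T) by noncomm_ring,
      nonsing_inv_mul S hS, mul_nonsing_inv S hS, one_mul]
  have hY : Y.det = X.det * (T * Y * T).det := by
    have hTS : T.det * S.det = 1 := det_nonsing_inv_mul_det S hS
    rw [← hSS, det_mul, det_mul, det_mul]
    linear_combination (-(Y.det) * (T.det * S.det + 1)) * hTS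
  calc X.det = X.det * 1 := (mul_one _).symm
    _ ≤ X.det * (T * Y * T).det := mul_le_mul_of_nonneg_left
        (one_le_det_of_one_le (hTXT ▸ hT.conjugate_le_conjugate h)) hX.det_pos.le
    _ = Y.det := hY.symm

lemma det_one_add_diagonal_sqrt_mul_mul {A : Matrix n n 𝕜} (hA : A.PosSemidef) {μ : n → ℝ}
    (hμ : 0 ≤ μ) :
    (1 + diagonal (fun i => ((√(μ i) : ℝ) : 𝕜)) * A *
        diagonal (fun i => ((√(μ i) : ℝ) : 𝕜))).det =
      (1 + CFC.sqrt A * diagonal (fun i => (μ i : 𝕜)) * CFC.sqrt A).det := by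
  set D := diagonal (fun i => ((√(μ i) : ℝ) : 𝕜))
  have hDD : D * D = diagonal (fun i => (μ i : 𝕜)) := by
    simp_rw [D, diagonal_mul_diagonal, ← RCLike.ofReal_mul, Real.mul_self_sqrt (hμ _)]
  conv_lhs => rw [← CFC.sqrt_mul_sqrt_self A hA.nonneg]
  rw [show D * (CFC.sqrt A * CFC.sqrt A) * D =
    (D * CFC.sqrt A) * (CFC.sqrt A * D) by noncomm_ring, det_one_add_mul_comm, ← hDD]
  noncomm_ring

lemma det_one_add_diagonal_sqrt_mul_mul_le {A : Matrix n n 𝕜} (hA : A.PosSemidef)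
    {μ μ' : n → ℝ} (hμ : 0 ≤ μ) (hle : μ ≤ μ') :
    (1 + diagonal (fun i => ((√(μ i) : ℝ) : 𝕜)) * A *
        diagonal (fun i => ((√(μ i) : ℝ) : 𝕜))).det ≤
      (1 + diagonal (fun i => ((√(μ' i) : ℝ) : 𝕜)) * A *
        diagonal (fun i => ((√(μ' i) : ℝ) : 𝕜))).det := by
  rw [det_one_add_diagonal_sqrt_mul_mul hA hμ,
    det_one_add_diagonal_sqrt_mul_mul hA (hμ.trans hle)]
  have hR : IsSelfAdjoint (CFC.sqrt A) := (CFC.sqrt_nonneg A).isSelfAdjoint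
  have hdiag : diagonal (fun i => (μ i : 𝕜)) ≤ diagonal (fun i => (μ' i : 𝕜)) := by
    rw [le_iff, diagonal_sub]
    exact PosSemidef.diagonal fun i => by simpa using hle i
  have hpos : (1 + CFC.sqrt A * diagonal (fun i => (μ i : 𝕜)) * CFC.sqrt A).PosDef :=
    PosDef.one.add_posSemidef <| nonneg_iff_posSemidef.mp <| hR.conjugate_nonneg <|
      nonneg_iff_posSemidef.mpr <| PosSemidef.diagonal fun i => by simpa using hμ i
  exact det_le_det_of_le hpos (add_le_add_right (hR.conjugate_le_conjugate hdiag) 1)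

end Matrix

/-- Determinant monotonicity lemma: for Hermitian PSD `A` and diagonal matrices
`M' ⪰ M ≻ 0` (entrywise `0 < μ i ≤ μ' i`),
`det(I + M'^{1/2} A M'^{1/2}) ≥ det(I + M^{1/2} A M^{1/2})`.
Both determinants are real and positive, so we compare real parts. -/
theorem stmt_4 (n : ℕ) (A : Matrix (Fin n) (Fin n) ℂ) (hA : A.PosSemidef)
    (μ μ' : Fin n → ℝ) (hμ : ∀ i, 0 < μ i) (hle : ∀ i, μ i ≤ μ' i) :
    ((1 + Matrix.diagonal (fun i => ((Real.sqrt (μ' i) : ℝ) : ℂ)) * A *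
        Matrix.diagonal (fun i => ((Real.sqrt (μ' i) : ℝ) : ℂ))).det).re ≥
    ((1 + Matrix.diagonal (fun i => ((Real.sqrt (μ i) : ℝ) : ℂ)) * A *
        Matrix.diagonal (fun i => ((Real.sqrt (μ i) : ℝ) : ℂ))).det).re :=
  Complex.re_le_re (det_one_add_diagonal_sqrt_mul_mul_le hA (fun i => (hμ i).le) hle)
end

section
/- Consider a single FIFO queue with $q$ input links, each carrying packets with inter-arrival time at least $qC$ on each link, where the output transmission time per packet is $C$. Then at most $q$ packets can be present simultaneously in the queue at any time (one per link), and consequently the queuing delay of any packet is at most $(q-1)C$. -/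
/-!
Call a packet late if it waits more than `(q-1)C`. While a late packet `p` waits, the server
is busy at the `q` instants `a p, a p + C, …, a p + (q-1)C`, each time with a different packet
that (by FIFO) arrived no later than `p` and started after `a p - C`. Together with `p` these are
`q + 1` packets on `q` links, so two of them share a link; the earlier one of the two started
after `a p - C` although it arrived at least `qC` before `p`, hence it is late as well. Late
packets would thus have arrival times descending in steps of `qC`, which is impossible since
arrival times are bounded below.
-/

open Set Function

theorem not_of_forall_exists_add_le {ι : Type*} {P : ι → Prop} {f : ι → ℝ} {d : ℝ}
    (hd : 0 < d) (hf : BddBelow (range f)) (hstep : ∀ x, P x → ∃ y, P y ∧ f y + d ≤ f x)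
    (x : ι) : ¬ P x := by
  obtain ⟨m, hm⟩ := hf
  have hlow : ∀ n : ℕ, ∀ x, f x < m + n * d → ¬ P x := by
    intro n
    induction n with
    | zero => exact fun x hx _ => (hm ⟨x, rfl⟩).not_gt (by simpa using hx)
    | succ n ih =>
      intro x hx hPx
      obtain ⟨y, hPy, hy⟩ := hstep x hPx
      exact ih y (by push_cast at hx; linarith) hPy
  obtain ⟨n, hn⟩ := exists_nat_gt ((f x - m) / d)
  exact hlow n x (by rw [div_lt_iff₀ hd] at hn; linarith)

lemma add_le_of_lt_of_forall_add_le_succ {f : ℕ → ℝ} {d : ℝ} (hd : 0 ≤ d)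
    (hf : ∀ k, f k + d ≤ f (k + 1)) {m n : ℕ} (hmn : m < n) : f m + d ≤ f n :=
  (hf m).trans (monotone_nat_of_le_succ (fun k => by linarith [hf k]) hmn)

lemma Nat.eq_of_add_mul_mem_Ico {C s t : ℝ} (hC : 0 < C) {i j : ℕ}
    (hi : t + i * C ∈ Ico s (s + C)) (hj : t + j * C ∈ Ico s (s + C)) : i = j := by
  obtain ⟨hi₁, hi₂⟩ := hi
  obtain ⟨hj₁, hj₂⟩ := hj
  have hij : (i : ℝ) < j + 1 :=
    lt_of_mul_lt_mul_right (by linarith : (i : ℝ) * C < (j + 1) * C) hC.le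
  have hji : (j : ℝ) < i + 1 :=
    lt_of_mul_lt_mul_right (by linarith : (j : ℝ) * C < (i + 1) * C) hC.le
  have : i < j + 1 := by exact_mod_cast hij
  have : j < i + 1 := by exact_mod_cast hji
  omega

lemma exists_fst_eq_snd_lt_of_card_lt {ι α : Type*} [Fintype ι] [Fintype α] {f : ι → α × ℕ}
    (hf : Injective f) (hcard : Fintype.card α < Fintype.card ι) :
    ∃ x y, (f x).1 = (f y).1 ∧ (f x).2 < (f y).2 := by
  obtain ⟨x, y, hxy, hfst⟩ := Fintype.exists_ne_map_eq_of_card_lt (Prod.fst ∘ f) hcard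
  have hsnd : (f x).2 ≠ (f y).2 := fun h => hxy (hf (Prod.ext hfst h))
  rcases hsnd.lt_or_gt with hlt | hlt
  · exact ⟨x, y, hfst, hlt⟩
  · exact ⟨y, x, hfst.symm, hlt⟩

namespace FifoQueue

variable {q : ℕ} {C : ℝ} {a start : Fin q → ℕ → ℝ}

lemma bddBelow_range_arrival (hC : 0 ≤ C) (hgap : ∀ ℓ k, a ℓ k + (q : ℝ) * C ≤ a ℓ (k + 1)) :
    BddBelow (range fun p : Fin q × ℕ => a p.1 p.2) := by
  obtain ⟨m, hm⟩ := (finite_range fun ℓ => a ℓ 0).bddBelow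
  refine ⟨m, ?_⟩
  rintro _ ⟨⟨ℓ, k⟩, rfl⟩
  have hqC : 0 ≤ (q : ℝ) * C := by positivity
  have hmono : Monotone (a ℓ) := monotone_nat_of_le_succ fun k => by linarith [hgap ℓ k]
  exact (hm ⟨ℓ, rfl⟩).trans (hmono k.zero_le)

lemma late_of_successor_arrived (hC : 0 ≤ C)
    (hgap : ∀ ℓ k, a ℓ k + (q : ℝ) * C ≤ a ℓ (k + 1)) {g : Fin q} {k₁ k₂ : ℕ} (h12 : k₁ < k₂)
    {T : ℝ} (harr : a g k₂ ≤ T) (hstart : T - C < start g k₁) :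
    ((q : ℝ) - 1) * C < start g k₁ - a g k₁ ∧ a g k₁ + q * C ≤ T := by
  have := add_le_of_lt_of_forall_add_le_succ (by positivity) (hgap g) h12
  constructor <;> linarith

lemma exists_in_service_of_late (hC : 0 ≤ C)
    (hfifo : ∀ ℓ k ℓ' k', a ℓ k < a ℓ' k' → start ℓ k ≤ start ℓ' k')
    (hbusy : ∀ ℓ k, ∀ t : ℝ, a ℓ k ≤ t → t < start ℓ k →
      ∃ ℓ' k', start ℓ' k' ≤ t ∧ t < start ℓ' k' + C)
    {ℓ : Fin q} {k : ℕ} (hlate : ((q : ℝ) - 1) * C < start ℓ k - a ℓ k) (j : Fin q) :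
    ∃ p : Fin q × ℕ, p ≠ (ℓ, k) ∧ a ℓ k + j * C ∈ Ico (start p.1 p.2) (start p.1 p.2 + C) ∧
      a p.1 p.2 ≤ a ℓ k := by
  have hjq : (j : ℝ) * C ≤ ((q : ℝ) - 1) * C := by
    have : (j : ℝ) + 1 ≤ q := by exact_mod_cast j.2
    gcongr
    linarith
  obtain ⟨ℓ', k', hs, hs'⟩ :=
    hbusy ℓ k (a ℓ k + j * C) (le_add_of_nonneg_right (by positivity)) (by linarith)
  refine ⟨(ℓ', k'), fun h => ?_, ⟨hs, hs'⟩, ?_⟩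
  · simp only [Prod.mk.injEq] at h
    obtain ⟨rfl, rfl⟩ := h
    linarith
  by_contra! h
  linarith [hfifo ℓ k ℓ' k' h]

lemma exists_late_add_le_of_late (hC : 0 < C)
    (hgap : ∀ ℓ k, a ℓ k + (q : ℝ) * C ≤ a ℓ (k + 1))
    (hfifo : ∀ ℓ k ℓ' k', a ℓ k < a ℓ' k' → start ℓ k ≤ start ℓ' k')
    (hbusy : ∀ ℓ k, ∀ t : ℝ, a ℓ k ≤ t → t < start ℓ k →
      ∃ ℓ' k', start ℓ' k' ≤ t ∧ t < start ℓ' k' + C)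
    {ℓ : Fin q} {k : ℕ} (hlate : ((q : ℝ) - 1) * C < start ℓ k - a ℓ k) :
    ∃ p : Fin q × ℕ, ((q : ℝ) - 1) * C < start p.1 p.2 - a p.1 p.2 ∧ a p.1 p.2 + q * C ≤ a ℓ k := by
  choose P hPne hPserv hParr using exists_in_service_of_late hC.le hfifo hbusy hlate
  -- `none` is the late packet itself, `some j` the packet in service at time `a ℓ k + j * C`.
  let F : Option (Fin q) → Fin q × ℕ := fun o => o.elim (ℓ, k) P
  have hF : Injective F := by
    rintro (_ | i) (_ | j) h <;> simp only [F, Option.elim] at h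
    · rfl
    · exact absurd h.symm (hPne j)
    · exact absurd h (hPne i)
    · exact congrArg some (Fin.ext (Nat.eq_of_add_mul_mem_Ico hC (hPserv i) (h ▸ hPserv j)))
  have hFsys : ∀ o, a (F o).1 (F o).2 ≤ a ℓ k ∧ a ℓ k - C < start (F o).1 (F o).2 := by
    rintro (_ | j) <;> simp only [F, Option.elim]
    · have : (1 : ℝ) ≤ q := by exact_mod_cast ℓ.pos
      exact ⟨le_rfl, by linarith [mul_nonneg (sub_nonneg.2 this) hC.le]⟩
    · exact ⟨hParr j, by linarith [(hPserv j).2, mul_nonneg (Nat.cast_nonneg (α := ℝ) j) hC.le]⟩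
  obtain ⟨x, y, hlink, hlt⟩ := exists_fst_eq_snd_lt_of_card_lt hF (by simp)
  obtain ⟨hlate', hearly⟩ := late_of_successor_arrived hC.le hgap hlt
    (hlink ▸ (hFsys y).1) (hFsys x).2
  exact ⟨F x, hlate', hearly⟩

end FifoQueue

theorem stmt_8_general (q : ℕ) (C : ℝ) (hC : 0 < C)
    (a : Fin q → ℕ → ℝ)                 -- arrival times on each link
    (start : Fin q → ℕ → ℝ)             -- service start times
    -- inter-arrival time on each link at least q*C
    (hgap : ∀ ℓ k, a ℓ k + (q : ℝ) * C ≤ a ℓ (k + 1))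
    -- FIFO order: an earlier arrival starts service no later
    (hfifo : ∀ ℓ k ℓ' k', a ℓ k < a ℓ' k' → start ℓ k ≤ start ℓ' k')
    -- work conservation: while a packet waits, the server is busy
    (hbusy : ∀ ℓ k, ∀ t : ℝ, a ℓ k ≤ t → t < start ℓ k →
      ∃ ℓ' k', start ℓ' k' ≤ t ∧ t < start ℓ' k' + C) :
    ∀ ℓ k, start ℓ k - a ℓ k ≤ ((q : ℝ) - 1) * C := by
  intro ℓ k
  have hqC : 0 < (q : ℝ) * C := mul_pos (by exact_mod_cast ℓ.pos) hC
  exact not_lt.mp <| not_of_forall_exists_add_le (P := fun p : Fin q × ℕ =>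
    ((q : ℝ) - 1) * C < start p.1 p.2 - a p.1 p.2) hqC
    (FifoQueue.bddBelow_range_arrival hC.le hgap)
    (fun _ hp => FifoQueue.exists_late_add_le_of_late hC hgap hfifo hbusy hp) (ℓ, k)

/-- FIFO queue with `q` input links: packets are indexed by `(link, sequence
number)`, arrive with inter-arrival time at least `q*C` on each link, and are
served FIFO by a single work-conserving server with service time `C`.  Every
packet waits at most `(q-1)*C`. -/
theorem stmt_8 (q : ℕ) (hq : 1 ≤ q) (C : ℝ) (hC : 0 < C)
    (a : Fin q → ℕ → ℝ)                 -- arrival times on each link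
    (start : Fin q → ℕ → ℝ)             -- service start times
    -- inter-arrival time on each link at least q*C
    (hgap : ∀ ℓ k, a ℓ k + (q : ℝ) * C ≤ a ℓ (k + 1))
    -- a packet cannot start service before it arrives
    (harr : ∀ ℓ k, a ℓ k ≤ start ℓ k)
    -- FIFO order: an earlier arrival starts service no later
    (hfifo : ∀ ℓ k ℓ' k', a ℓ k < a ℓ' k' → start ℓ k ≤ start ℓ' k')
    -- single server: service intervals of distinct packets do not overlap
    (hserial : ∀ ℓ k ℓ' k', (ℓ, k) ≠ (ℓ', k') →
      start ℓ k + C ≤ start ℓ' k' ∨ start ℓ' k' + C ≤ start ℓ k)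
    -- work conservation: while a packet waits, the server is busy
    (hbusy : ∀ ℓ k, ∀ t : ℝ, a ℓ k ≤ t → t < start ℓ k →
      ∃ ℓ' k', start ℓ' k' ≤ t ∧ t < start ℓ' k' + C) :
    ∀ ℓ k, start ℓ k - a ℓ k ≤ ((q : ℝ) - 1) * C :=
  stmt_8_general q C hC a start hgap hfifo hbusy
end
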